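/- Let k ≥ 6 and let G be an odd k⁺-critical graph. Then G has no vertex of degree 1, and for every easy vertex v (a vertex of odd degree or with a 2-neighbor), 2·d(v) ≥ |N₂(v)| + |N_ez(v)| + k − 1, where N₂(v) is the set of 2-neighbors of v and N_ez(v) the set of easy neighbors of v. -/

import Mathlib

open SimpleGraph

/-- The degree of a vertex, as the cardinality of its neighbor set. -/
noncomputable def deg {V : Type} (G : SimpleGraph V) (v : V) : ℕ := (G.neighborSet v).ncard

/-- `H` is a minor of `G`, via branch sets. -/
def IsMinor {W V : Type} (H : SimpleGraph W) (G : SimpleGraph V) : Prop :=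
  ∃ B : W → Set V,
    (∀ w, (B w).Nonempty) ∧
    (∀ w, (G.induce (B w)).Connected) ∧
    (Pairwise fun w₁ w₂ => Disjoint (B w₁) (B w₂)) ∧
    (∀ w₁ w₂, H.Adj w₁ w₂ → ∃ v₁ ∈ B w₁, ∃ v₂ ∈ B w₂, G.Adj v₁ v₂)

/-- A graph is planar iff it has no `K₅` and no `K₃,₃` minor (Wagner's theorem). -/
def IsPlanar {V : Type} (G : SimpleGraph V) : Prop :=
  ¬ IsMinor (completeGraph (Fin 5)) G ∧
  ¬ IsMinor (completeBipartiteGraph (Fin 3) (Fin 3)) G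

/-- `G` has thickness at most `t`: its edge set partitions into `t` planar subgraphs. -/
def ThicknessLE {V : Type} (G : SimpleGraph V) (t : ℕ) : Prop :=
  ∃ c : Sym2 V → Fin t, ∀ i : Fin t,
    IsPlanar (SimpleGraph.fromEdgeSet {e | e ∈ G.edgeSet ∧ c e = i})

/-- The thickness of a graph. -/
noncomputable def thickness {V : Type} (G : SimpleGraph V) : ℕ :=
  sInf {t | ThicknessLE G t}

/-- `φ` is an odd coloring of `G` with `k` colors. -/
def IsOddColoring {V : Type} (G : SimpleGraph V) {k : ℕ} (φ : V → Fin k) : Prop :=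
  (∀ ⦃u v⦄, G.Adj u v → φ u ≠ φ v) ∧
  ∀ v : V, (G.neighborSet v).Nonempty →
    ∃ c : Fin k, Odd ({u | u ∈ G.neighborSet v ∧ φ u = c}.ncard)

/-- The odd chromatic number of `G`. -/
noncomputable def oddChrom {V : Type} (G : SimpleGraph V) : ℕ :=
  sInf {k | ∃ φ : V → Fin k, IsOddColoring G φ}

/-- `G` is odd `k⁺`-critical. -/
def OddCritical {V : Type} (G : SimpleGraph V) (k : ℕ) : Prop :=
  k ≤ oddChrom G ∧ ∀ H : G.Subgraph, H ≠ ⊤ → oddChrom H.coe < k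

/-- A vertex is `n`-easy if its degree is odd or it has a neighbor of degree `2i`, `1 ≤ i ≤ n`. -/
def NEasy {V : Type} (G : SimpleGraph V) (n : ℕ) (v : V) : Prop :=
  Odd (deg G v) ∨ ∃ u ∈ G.neighborSet v, ∃ i, 1 ≤ i ∧ i ≤ n ∧ deg G u = 2 * i

/-!
Colour `G - v` with `k - 1` colours (criticality) and give `v` a colour `α`. A vertex `r` of
degree 2 can be recoloured, once at least 5 colours are available, so that its two edges are
proper and both its neighbours see some colour an odd number of times; this changes nothing
elsewhere. Hence a colouring whose defects all lie on or next to vertices of degree 2 can be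
repaired into an odd colouring. If `2 d(v) < |N₂(v)| + |N_ez(v)| + k - 1`, fewer than `k - 1`
colours are forbidden for `α`: the colours of the neighbours of `v` of degree `≠ 2`, and, for each
neighbour `z` that is not easy, the odd colour of `z` in `G - v` when it is unique. With this
choice every remaining defect is next to a vertex of degree 2, because by parity a vertex of odd
degree always sees an odd colour; this gives an odd `(k - 1)`-colouring of `G`. A vertex of
degree 1 is easy and violates the bound, since `k ≥ 6`.
-/

open Function
open scoped symmDiff

section OddColors

variable {V C : Type*}

def oddColors (S : Set V) (f : V → C) : Set C :=
  {c | Odd {u | u ∈ S ∧ f u = c}.ncard}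

lemma oddColors_congr {S : Set V} {f g : V → C} (h : S.EqOn f g) :
    oddColors S f = oddColors S g := by
  have hfib : ∀ c, {u | u ∈ S ∧ f u = c} = {u | u ∈ S ∧ g u = c} :=
    fun c => Set.ext fun u => and_congr_right fun hu => by rw [h hu]
  simp only [oddColors, hfib]

lemma oddColors_insert {S : Set V} {x : V} (hS : S.Finite) (hx : x ∉ S) (f : V → C) :
    oddColors (insert x S) f = oddColors S f ∆ {f x} := by
  ext c
  by_cases hc : f x = c
  · have hfib : {u | u ∈ insert x S ∧ f u = c} = insert x {u | u ∈ S ∧ f u = c} := by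
      ext u
      simp only [Set.mem_insert_iff, Set.mem_ofPred_eq]
      constructor
      · rintro ⟨rfl | hu, hfu⟩ <;> simp_all
      · rintro (rfl | ⟨hu, hfu⟩) <;> simp_all
    rw [oddColors, Set.mem_ofPred_eq, hfib,
      Set.ncard_insert_of_notMem (fun h => hx h.1) (hS.subset fun u hu => hu.1)]
    simp [Set.mem_symmDiff, oddColors, hc, Nat.odd_add_one]
  · have hfib : {u | u ∈ insert x S ∧ f u = c} = {u | u ∈ S ∧ f u = c} := by
      ext u
      simp only [Set.mem_insert_iff, Set.mem_ofPred_eq, and_congr_left_iff, or_iff_right_iff_imp]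
      rintro hu rfl
      exact absurd hu hc
    simp only [oddColors, Set.mem_symmDiff, Set.mem_ofPred_eq, hfib, Set.mem_singleton_iff,
      Ne.symm hc, not_false_eq_true, and_true, false_and, or_false]

lemma oddColors_update_of_mem [DecidableEq V] {S : Set V} {r : V} (hS : S.Finite) (hr : r ∈ S)
    (f : V → C) (β : C) :
    oddColors S (update f r β) = oddColors (S \ {r}) f ∆ {β} := by
  conv_lhs => rw [← Set.insert_eq_of_mem hr, ← Set.insert_sdiff_singleton]
  rw [oddColors_insert (S := S \ {r}) hS.sdiff (fun h => h.2 rfl), update_self,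
    oddColors_congr fun u hu => update_of_ne hu.2 β f]

lemma oddColors_update_of_notMem [DecidableEq V] {S : Set V} {r : V} (hr : r ∉ S) (f : V → C)
    (β : C) : oddColors S (update f r β) = oddColors S f :=
  oddColors_congr fun _ hu => update_of_ne (ne_of_mem_of_not_mem hu hr) β f

lemma oddColors_image {W : Type*} {g : W → V} {S : Set W} (hg : S.InjOn g) (f : V → C) :
    oddColors (g '' S) f = oddColors S (f ∘ g) := by
  have hfib : ∀ c, {u | u ∈ g '' S ∧ f u = c} = g '' {w | w ∈ S ∧ f (g w) = c} := by
    intro c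
    ext u
    simp only [Set.mem_image, Set.mem_ofPred_eq]
    constructor
    · rintro ⟨⟨w, hw, rfl⟩, hc⟩
      exact ⟨w, ⟨hw, hc⟩, rfl⟩
    · rintro ⟨w, ⟨hw, hc⟩, rfl⟩
      exact ⟨⟨w, hw, rfl⟩, hc⟩
  ext c
  have hinj : Set.InjOn g {w | w ∈ S ∧ f (g w) = c} := hg.mono fun _ hw => hw.1
  simp only [oddColors, Set.mem_ofPred_eq, hfib, comp_apply, hinj.ncard_image]

lemma oddColors_nonempty_of_odd_ncard {S : Set V} (hS : S.Finite) (hodd : Odd S.ncard)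
    (f : V → C) : (oddColors S f).Nonempty := by
  classical
  by_contra hempty
  have heven : ∀ c, Even {u | u ∈ S ∧ f u = c}.ncard :=
    fun c => Nat.not_odd_iff_even.mp fun hc => hempty ⟨c, hc⟩
  rw [Set.ncard_eq_toFinset_card S hS, Finset.card_eq_sum_card_image f] at hodd
  refine Nat.not_even_iff_odd.mpr hodd (Finset.even_sum _ fun c _ => ?_)
  have hfib : {u | u ∈ S ∧ f u = c} = ↑({u ∈ hS.toFinset | f u = c}) := by
    ext u
    simp
  have := heven c
  rwa [hfib, Set.ncard_coe_finset] at this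

lemma exists_color_avoiding [Finite C] {T U : Set V} (hT : T.Finite) (hU : U.Finite)
    (hcard : T.ncard + U.ncard < Nat.card C) (f : V → C) (X : V → Set C) :
    ∃ c, (∀ y ∈ T, f y ≠ c) ∧ ∀ y ∈ U, X y ≠ {c} := by
  set F := f '' T ∪ ⋃ y ∈ hU.toFinset, {c | X y = {c}}
  have hF : F.ncard < (Set.univ : Set C).ncard := by
    calc F.ncard ≤ (f '' T).ncard + (⋃ y ∈ hU.toFinset, {c | X y = {c}}).ncard :=
          Set.ncard_union_le _ _
      _ ≤ T.ncard + ∑ y ∈ hU.toFinset, {c | X y = {c}}.ncard :=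
          add_le_add (Set.ncard_image_le hT) (Finset.set_ncard_biUnion_le _ _)
      _ ≤ T.ncard + ∑ _y ∈ hU.toFinset, 1 := by
          gcongr with y
          exact Set.ncard_le_one_iff_subsingleton.mpr
            fun c₁ h₁ c₂ h₂ => Set.singleton_eq_singleton_iff.mp (h₁.symm.trans h₂)
      _ < (Set.univ : Set C).ncard := by
          simpa [Set.ncard_eq_toFinset_card U hU] using hcard
  obtain ⟨c, -, hc⟩ := Set.sdiff_nonempty_of_ncard_lt_ncard hF
  refine ⟨c, fun y hy hyc => hc (Or.inl ⟨y, hy, hyc⟩), fun y hy hyc => hc (Or.inr ?_)⟩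
  simp only [Set.mem_iUnion]
  exact ⟨y, hU.mem_toFinset.mpr hy, hyc⟩

end OddColors

section Recoloring

variable {V C : Type} [Finite V] [DecidableEq V] (G : SimpleGraph V)

lemma exists_recolor_odd_at_neighbors [Finite C] {r : V}
    (hr : 2 * (G.neighborSet r).ncard < Nat.card C) (ψ : V → C) :
    ∃ β, ∀ y ∈ G.neighborSet r,
      ψ y ≠ β ∧ (oddColors (G.neighborSet y) (update ψ r β)).Nonempty := by
  obtain ⟨β, hproper, hodd⟩ :=
    exists_color_avoiding (T := G.neighborSet r) (U := G.neighborSet r) (Set.toFinite _)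
      (Set.toFinite _) (by omega) ψ fun y => oddColors (G.neighborSet y \ {r}) ψ
  refine ⟨β, fun y hy => ⟨hproper y hy, ?_⟩⟩
  have hry : r ∈ G.neighborSet y := G.adj_symm hy
  rw [oddColors_update_of_mem (Set.toFinite _) hry, Set.nonempty_iff_ne_empty]
  exact fun h => hodd y hy (symmDiff_eq_bot.mp h)

lemma exists_recoloring_clearing_defects [Finite C] (ψ : V → C) (R : Finset V)
    (hR : ∀ r ∈ R, 2 * (G.neighborSet r).ncard < Nat.card C) :
    ∃ ψ' : V → C,
      (∀ ⦃x y⦄, G.Adj x y → ψ' x = ψ' y → ψ x = ψ y ∧ x ∉ R ∧ y ∉ R) ∧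
      ∀ z, oddColors (G.neighborSet z) ψ' = ∅ →
        oddColors (G.neighborSet z) ψ = ∅ ∧ ∀ r ∈ R, ¬ G.Adj z r := by
  induction R using Finset.induction_on with
  | empty => exact ⟨ψ, fun _ _ _ h => ⟨h, by simp, by simp⟩, fun _ h => ⟨h, by simp⟩⟩
  | insert r R _ ih =>
    obtain ⟨ψ₀, hproper₀, hodd₀⟩ := ih fun r' hr' => hR r' (Finset.mem_insert_of_mem hr')
    obtain ⟨β, hβ⟩ := exists_recolor_odd_at_neighbors G (hR r (Finset.mem_insert_self r R)) ψ₀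
    refine ⟨update ψ₀ r β, fun x y hxy hc => ?_, fun z hz => ?_⟩
    · by_cases hx : x = r
      · subst hx
        rw [update_self, update_of_ne (G.ne_of_adj hxy).symm] at hc
        exact absurd hc.symm (hβ y hxy).1
      by_cases hy : y = r
      · subst hy
        rw [update_self, update_of_ne (G.ne_of_adj hxy)] at hc
        exact absurd hc (hβ x (G.adj_symm hxy)).1
      rw [update_of_ne hx, update_of_ne hy] at hc
      obtain ⟨h, hxR, hyR⟩ := hproper₀ hxy hc
      simp [h, hx, hy, hxR, hyR]
    · have hzr : ¬ G.Adj z r := fun hzr => (hβ z (G.adj_symm hzr)).2.ne_empty hz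
      rw [oddColors_update_of_notMem (show r ∉ G.neighborSet z from hzr)] at hz
      obtain ⟨h, hRz⟩ := hodd₀ z hz
      exact ⟨h, by simpa [hzr] using hRz⟩

lemma exists_isOddColoring_of_defects_near_deg_eq_two {m : ℕ} (hm : 5 ≤ m) (ψ : V → Fin m)
    (hproper : ∀ ⦃x y⦄, G.Adj x y → ψ x = ψ y → deg G x = 2 ∨ deg G y = 2)
    (hodd : ∀ z, (G.neighborSet z).Nonempty → oddColors (G.neighborSet z) ψ = ∅ →
      ∃ r ∈ G.neighborSet z, deg G r = 2) :
    ∃ φ : V → Fin m, IsOddColoring G φ := by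
  classical
  have := Fintype.ofFinite V
  obtain ⟨φ, hφproper, hφodd⟩ := exists_recoloring_clearing_defects G ψ
    {r | deg G r = 2}.toFinset fun r hr => by
      rw [Set.mem_toFinset, Set.mem_ofPred_eq, deg] at hr
      rw [Nat.card_fin, hr]
      omega
  refine ⟨φ, fun x y hxy hc => ?_, fun z hz => ?_⟩
  · obtain ⟨h, hx, hy⟩ := hφproper hxy hc
    rcases hproper hxy h with h2 | h2 <;> simp_all
  · by_contra hempty
    obtain ⟨h, hR⟩ := hφodd z (Set.not_nonempty_iff_eq_empty.mp hempty)
    obtain ⟨r, hr, hr2⟩ := hodd z hz h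
    exact hR r (by simpa using hr2) hr

end Recoloring

section OddChromaticNumber

variable {V : Type} (G : SimpleGraph V)

lemma isOddColoring_of_injective {m : ℕ} {φ : V → Fin m} (hφ : Injective φ) :
    IsOddColoring G φ := by
  refine ⟨fun x y hxy h => G.ne_of_adj hxy (hφ h), fun v ⟨u, hu⟩ => ⟨φ u, ?_⟩⟩
  have hfib : {w | w ∈ G.neighborSet v ∧ φ w = φ u} = {u} := by
    ext w
    simp only [Set.mem_ofPred_eq, hφ.eq_iff, Set.mem_singleton_iff, and_iff_right_iff_imp]
    rintro rfl
    exact hu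
  rw [hfib, Set.ncard_singleton]
  exact odd_one

lemma IsOddColoring.comp_injective {m n : ℕ} {φ : V → Fin m} (hφ : IsOddColoring G φ)
    {e : Fin m → Fin n} (he : Injective e) : IsOddColoring G (e ∘ φ) := by
  refine ⟨fun x y hxy h => hφ.1 hxy (he h), fun v hv => ?_⟩
  obtain ⟨c, hc⟩ := hφ.2 v hv
  exact ⟨e c, by simpa only [comp_apply, he.eq_iff] using hc⟩

lemma exists_isOddColoring_of_oddChrom_le [Finite V] {m : ℕ} (h : oddChrom G ≤ m) :
    ∃ φ : V → Fin m, IsOddColoring G φ := by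
  obtain ⟨φ, hφ⟩ : ∃ φ : V → Fin (oddChrom G), IsOddColoring G φ :=
    Nat.sInf_mem (s := {k | ∃ φ : V → Fin k, IsOddColoring G φ})
      ⟨_, _, isOddColoring_of_injective G (Finite.equivFin V).injective⟩
  exact ⟨_, hφ.comp_injective G (Fin.castLE_injective h)⟩

lemma not_isOddColoring_of_lt_oddChrom {m : ℕ} (h : m < oddChrom G) (φ : V → Fin m) :
    ¬ IsOddColoring G φ :=
  fun hφ => (Nat.sInf_le ⟨φ, hφ⟩ : oddChrom G ≤ m).not_gt h

end OddChromaticNumber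

section Critical

variable {V : Type} (G : SimpleGraph V)

lemma OddCritical.exists_oddColoring_deleteVerts [Finite V] {k : ℕ} (hG : OddCritical G k)
    (hk : 2 ≤ k) (v : V) :
    ∃ φ : V → Fin (k - 1), (∀ ⦃x y⦄, G.Adj x y → x ≠ v → y ≠ v → φ x ≠ φ y) ∧
      ∀ z ≠ v, (G.neighborSet z \ {v}).Nonempty →
        (oddColors (G.neighborSet z \ {v}) φ).Nonempty := by
  classical
  set H := (⊤ : G.Subgraph).deleteVerts {v}
  have hverts : ∀ x, x ∈ H.verts ↔ x ≠ v := by simp [H]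
  have hH : H ≠ ⊤ := fun h => (hverts v).mp (h ▸ trivial) rfl
  obtain ⟨φH, hφH⟩ :=
    exists_isOddColoring_of_oddChrom_le H.coe (Nat.le_pred_of_lt (hG.2 H hH))
  let φ : V → Fin (k - 1) := fun x =>
    if hx : x ∈ H.verts then φH ⟨x, hx⟩ else ⟨0, by omega⟩
  have hφ : φ ∘ Subtype.val = φH := funext fun w => dif_pos w.2
  have hnbr : ∀ z (hz : z ∈ H.verts),
      Subtype.val '' H.coe.neighborSet ⟨z, hz⟩ = G.neighborSet z \ {v} := by
    intro z hz
    ext x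
    simp +contextual [H, (hverts z).1 hz]
  refine ⟨φ, fun x y hxy hx hy => ?_, fun z hz hne => ?_⟩
  · have hadj : H.coe.Adj ⟨x, (hverts x).2 hx⟩ ⟨y, (hverts y).2 hy⟩ := by
      simp [H, hxy, hx, hy]
    simpa [φ, (hverts _).2 hx, (hverts _).2 hy] using hφH.1 hadj
  · have hz' := (hverts z).2 hz
    rw [← hnbr z hz', oddColors_image Subtype.val_injective.injOn, hφ]
    exact hφH.2 _ (Set.image_nonempty.mp (hnbr z hz' ▸ hne))

lemma NEasy.exists_deg_eq_two_of_oddColors_eq_empty [Finite V] {C : Type} {z : V}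
    (hz : NEasy G 1 z) {ψ : V → C} (h : oddColors (G.neighborSet z) ψ = ∅) :
    ∃ r ∈ G.neighborSet z, deg G r = 2 := by
  rcases hz with hodd | ⟨r, hr, i, hi1, hi2, hdeg⟩
  · exact absurd h (oddColors_nonempty_of_odd_ncard (Set.toFinite _) hodd ψ).ne_empty
  · exact ⟨r, hr, by omega⟩

section Extension

variable [DecidableEq V] {m : ℕ} {φ : V → Fin m} {v : V} {α : Fin m}

lemma deg_eq_two_of_update_eq_update (hφ : ∀ ⦃x y⦄, G.Adj x y → x ≠ v → y ≠ v → φ x ≠ φ y)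
    (hα : ∀ y ∈ G.neighborSet v, deg G y ≠ 2 → φ y ≠ α) ⦃x y : V⦄ (hxy : G.Adj x y)
    (hc : update φ v α x = update φ v α y) : deg G x = 2 ∨ deg G y = 2 := by
  by_cases hx : x = v
  · subst hx
    rw [update_self, update_of_ne (G.ne_of_adj hxy).symm] at hc
    exact .inr (not_not.mp fun h2 => hα y hxy h2 hc.symm)
  by_cases hy : y = v
  · subst hy
    rw [update_self, update_of_ne (G.ne_of_adj hxy)] at hc
    exact .inl (not_not.mp fun h2 => hα x (G.adj_symm hxy) h2 hc)
  rw [update_of_ne hx, update_of_ne hy] at hc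
  exact absurd hc (hφ hxy hx hy)

lemma exists_deg_eq_two_of_oddColors_update_eq_empty [Finite V]
    (hφ : ∀ z ≠ v, (G.neighborSet z \ {v}).Nonempty →
      (oddColors (G.neighborSet z \ {v}) φ).Nonempty)
    (hv : NEasy G 1 v)
    (hα : ∀ z ∈ G.neighborSet v, ¬ NEasy G 1 z → oddColors (G.neighborSet z \ {v}) φ ≠ {α})
    {z : V} (hz : (G.neighborSet z).Nonempty)
    (h : oddColors (G.neighborSet z) (update φ v α) = ∅) :
    ∃ r ∈ G.neighborSet z, deg G r = 2 := by
  by_cases hzv : z = v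
  · subst hzv
    exact hv.exists_deg_eq_two_of_oddColors_eq_empty G h
  by_cases hvz : v ∈ G.neighborSet z
  · have hsingle : oddColors (G.neighborSet z \ {v}) φ = {α} := by
      rw [oddColors_update_of_mem (Set.toFinite _) hvz] at h
      exact symmDiff_eq_bot.mp h
    have hez : NEasy G 1 z := not_not.mp fun hez => hα z (G.adj_symm hvz) hez hsingle
    exact hez.exists_deg_eq_two_of_oddColors_eq_empty G h
  · rw [oddColors_update_of_notMem hvz, ← Set.sdiff_singleton_eq_self hvz] at h
    rw [← Set.sdiff_singleton_eq_self hvz] at hz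
    exact absurd h (hφ z hzv hz).ne_empty

end Extension

lemma OddCritical.easy_degree_bound [Finite V] {k : ℕ} (hG : OddCritical G k) (hk : 6 ≤ k) {v : V}
    (hv : NEasy G 1 v) :
    {u | u ∈ G.neighborSet v ∧ deg G u = 2}.ncard +
      {u | u ∈ G.neighborSet v ∧ NEasy G 1 u}.ncard + k ≤ 2 * deg G v + 1 := by
  classical
  by_contra! hlt
  set N₂ := {u | u ∈ G.neighborSet v ∧ deg G u = 2}
  set Nez := {u | u ∈ G.neighborSet v ∧ NEasy G 1 u}
  obtain ⟨φ, hφproper, hφodd⟩ := hG.exists_oddColoring_deleteVerts G (by omega) v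
  have hcard : (G.neighborSet v \ N₂).ncard + (G.neighborSet v \ Nez).ncard
      < Nat.card (Fin (k - 1)) := by
    have h₂ : N₂.ncard ≤ deg G v := Set.ncard_le_ncard fun u hu => hu.1
    have hez : Nez.ncard ≤ deg G v := Set.ncard_le_ncard fun u hu => hu.1
    rw [Set.ncard_sdiff fun u hu => hu.1, Set.ncard_sdiff fun u hu => hu.1, Nat.card_fin]
    unfold deg at *
    omega
  obtain ⟨α, hα₂, hαez⟩ := exists_color_avoiding (Set.toFinite _) (Set.toFinite _) hcard φ
    fun z => oddColors (G.neighborSet z \ {v}) φ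
  obtain ⟨ψ, hψ⟩ := exists_isOddColoring_of_defects_near_deg_eq_two G (by omega) (update φ v α)
    (deg_eq_two_of_update_eq_update G hφproper fun y hy h2 => hα₂ y ⟨hy, fun h => h2 h.2⟩)
    (fun z => exists_deg_eq_two_of_oddColors_update_eq_empty G hφodd hv
      fun z hz hez => hαez z ⟨hz, fun h => hez h.2⟩)
  exact not_isOddColoring_of_lt_oddChrom G (by have := hG.1; omega) ψ hψ

end Critical

/-- For an odd `k⁺`-critical graph with `k ≥ 6`: there is no vertex of degree 1, and every easy
vertex `v` satisfies `2d(v) ≥ |N₂(v)| + |N_ez(v)| + k − 1`. -/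
theorem oddCritical_easy_degree_bound {V : Type} [Fintype V] (G : SimpleGraph V)
    (k : ℕ) (hk : 6 ≤ k) (hG : OddCritical G k) :
    (∀ v : V, deg G v ≠ 1) ∧
    ∀ v : V, NEasy G 1 v →
      {u | u ∈ G.neighborSet v ∧ deg G u = 2}.ncard +
        {u | u ∈ G.neighborSet v ∧ NEasy G 1 u}.ncard + k ≤ 2 * deg G v + 1 := by
  refine ⟨fun v hv => ?_, fun v => hG.easy_degree_bound G hk⟩
  have := hG.easy_degree_bound G hk (v := v) (.inl (hv ▸ odd_one))
  omega
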